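/- The largest eigenvalue μ of the Laplacian matrix of the graph K strictly exceeds max over all pairs of adjacent vertices v ~ j of 2 + √((m_v − m_j)² + 4·d_v·d_j − 4·(m_v + m_j) + 4). (This gives a counterexample to conjectured bound 68 of Brankov, Hansen and Stevanović.) -/

import Mathlib

/-- The edge list of the graph. -/
def edgeList : List (Fin 21 × Fin 21) :=
  [(0,3),(0,4),(0,5),(0,6),(0,7),(0,8),(0,9),(0,10),(0,11),(0,12),(0,13),(0,14),(0,15),(0,16),(0,17),(0,18),(0,19),(0,20),(1,2),(1,3),(2,7),(4,13),(5,6),(8,17),(9,18),(11,16),(14,19)]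

/-- The graph under consideration. -/
def G : SimpleGraph (Fin 21) where
  Adj v w := (v, w) ∈ edgeList ∨ (w, v) ∈ edgeList
  symm := ⟨fun _ _ h => h.symm⟩
  loopless := ⟨by intro v; fin_cases v <;> decide⟩

instance : DecidableRel G.Adj :=
  fun v w => inferInstanceAs (Decidable ((v, w) ∈ edgeList ∨ (w, v) ∈ edgeList))

/-- `d v` is the degree of the vertex `v`, as a real number. -/
noncomputable def d (v : Fin 21) : ℝ := G.degree v

/-- `m v` is the average of the degrees of the neighbours of `v`. -/
noncomputable def m (v : Fin 21) : ℝ :=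
  (∑ u ∈ G.neighborFinset v, (G.degree u : ℝ)) / d v

open Matrix in
/-- Any upper bound for the Laplacian spectrum exceeds `91/5`. -/
lemma mu_gt : ∀ μ : ℝ, (∀ ν ∈ spectrum ℝ (G.lapMatrix ℝ), ν ≤ μ) → 91/5 < μ := by
  intro μ hmax
  by_contra hcon
  push_neg at hcon
  set L := G.lapMatrix ℝ with hL
  set B := algebraMap ℝ (Matrix (Fin 21) (Fin 21) ℝ) (91/5) - L with hBdef
  have hLH : L.IsHermitian := (SimpleGraph.posSemidef_lapMatrix ℝ G).1
  have hB : B.IsHermitian := by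
    have h1 : Lᴴ = L := hLH
    have h2 : Lᵀ = L := SimpleGraph.isSymm_lapMatrix ℝ G
    simp [hBdef, Matrix.IsHermitian, Matrix.conjTranspose_sub, h1, h2,
      Algebra.algebraMap_eq_smul_one, Matrix.conjTranspose_smul]
  have hnn : ∀ i, 0 ≤ hB.eigenvalues i := by
    intro i
    have h1 := hB.eigenvalues_mem_spectrum_real i
    rw [← spectrum.singleton_sub_eq] at h1
    obtain ⟨a, ha, b, hb, hab⟩ := Set.mem_sub.mp h1
    have hbμ := hmax b hb
    simp only [Set.mem_singleton_iff] at ha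
    subst ha
    linarith [hab ▸ (by linarith : (0:ℝ) ≤ 91/5 - b)]
  have hPSD := hB.posSemidef_iff_eigenvalues_nonneg.mpr hnn
  set x : Fin 21 → ℝ :=
    ![-18, 0, 0, 1, 1, 1, 1, 1, 1, 1, 1, 1, 1, 1, 1, 1, 1, 1, 1, 1, 1] with hx
  have h2 := hPSD.dotProduct_mulVec_nonneg x
  rw [star_trivial] at h2
  have hq : x ⬝ᵥ L *ᵥ x = 6500 := by
    rw [← Matrix.toLinearMap₂'_apply', hL, SimpleGraph.lapMatrix_toLinearMap₂']
    simp (config := { decide := true }) only [Fin.sum_univ_succ, Fin.sum_univ_zero, hx,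
      Matrix.cons_val_zero, Matrix.cons_val_succ, if_true, if_false]
    norm_num
  have hn : x ⬝ᵥ x = 342 := by
    simp only [dotProduct, Fin.sum_univ_succ, Fin.sum_univ_zero, hx,
      Matrix.cons_val_zero, Matrix.cons_val_succ]
    norm_num
  rw [hBdef, Matrix.sub_mulVec, dotProduct_sub, hq,
    Algebra.algebraMap_eq_smul_one, Matrix.smul_mulVec, Matrix.one_mulVec,
    dotProduct_smul, hn] at h2
  norm_num at h2

/-- degree and neighbour-degree-sum classification of adjacent pairs -/
lemma pair_class : ∀ a b : Fin 21, G.Adj a b →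
    ((G.degree a = 18 ∧ (∑ u ∈ G.neighborFinset a, G.degree u) = 32 ∧
      G.degree b = 2 ∧ (∑ u ∈ G.neighborFinset b, G.degree u) = 20) ∨
     (G.degree a = 2 ∧ (∑ u ∈ G.neighborFinset a, G.degree u) = 20 ∧
      G.degree b = 18 ∧ (∑ u ∈ G.neighborFinset b, G.degree u) = 32) ∨
     (G.degree a = 18 ∧ (∑ u ∈ G.neighborFinset a, G.degree u) = 32 ∧
      G.degree b = 1 ∧ (∑ u ∈ G.neighborFinset b, G.degree u) = 18) ∨
     (G.degree a = 1 ∧ (∑ u ∈ G.neighborFinset a, G.degree u) = 18 ∧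
      G.degree b = 18 ∧ (∑ u ∈ G.neighborFinset b, G.degree u) = 32) ∨
     (G.degree a = 2 ∧ (∑ u ∈ G.neighborFinset a, G.degree u) = 4 ∧
      G.degree b = 2 ∧ (∑ u ∈ G.neighborFinset b, G.degree u) = 4) ∨
     (G.degree a = 2 ∧ (∑ u ∈ G.neighborFinset a, G.degree u) = 4 ∧
      G.degree b = 2 ∧ (∑ u ∈ G.neighborFinset b, G.degree u) = 20) ∨
     (G.degree a = 2 ∧ (∑ u ∈ G.neighborFinset a, G.degree u) = 20 ∧
      G.degree b = 2 ∧ (∑ u ∈ G.neighborFinset b, G.degree u) = 4) ∨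
     (G.degree a = 2 ∧ (∑ u ∈ G.neighborFinset a, G.degree u) = 20 ∧
      G.degree b = 2 ∧ (∑ u ∈ G.neighborFinset b, G.degree u) = 20)) := by decide

theorem laplacian_spectral_radius_exceeds_bound (μ : ℝ)
    (hmem : μ ∈ spectrum ℝ (G.lapMatrix ℝ))
    (hmax : ∀ ν ∈ spectrum ℝ (G.lapMatrix ℝ), ν ≤ μ) :
    (Finset.univ.filter fun p : _ × _ => G.Adj p.1 p.2).sup' (by decide)
      (fun p => 2 + Real.sqrt ((m p.1 - m p.2) ^ 2 + 4 * d p.1 * d p.2 - 4 * (m p.1 + m p.2) + 4)) < μ := by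
  have hmu : (91/5 : ℝ) < μ := mu_gt μ hmax
  rw [Finset.sup'_lt_iff]
  intro p hp
  rw [Finset.mem_filter] at hp
  have hadj := hp.2
  refine lt_of_le_of_lt ?_ hmu
  have cm : ∀ v : Fin 21, m v =
      ((∑ u ∈ G.neighborFinset v, G.degree u : ℕ) : ℝ) / ((G.degree v : ℕ) : ℝ) := by
    intro v; rw [m, d, Nat.cast_sum]
  have cd : ∀ v : Fin 21, d v = ((G.degree v : ℕ) : ℝ) := fun v => rfl
  have key : (m p.1 - m p.2) ^ 2 + 4 * d p.1 * d p.2 - 4 * (m p.1 + m p.2) + 4 ≤ 6561/25 := by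
    rcases pair_class p.1 p.2 hadj with
      ⟨h1, h2, h3, h4⟩ | ⟨h1, h2, h3, h4⟩ | ⟨h1, h2, h3, h4⟩ | ⟨h1, h2, h3, h4⟩ |
      ⟨h1, h2, h3, h4⟩ | ⟨h1, h2, h3, h4⟩ | ⟨h1, h2, h3, h4⟩ | ⟨h1, h2, h3, h4⟩ <;>
      rw [cm, cm, cd, cd, h1, h2, h3, h4] <;> norm_num
  have hs := Real.sqrt_le_sqrt key
  rw [show (6561/25:ℝ) = (81/5)^2 by norm_num,
    Real.sqrt_sq (by norm_num : (0:ℝ) ≤ 81/5)] at hs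
  linarith
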